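/- Let d ≥ 3, σ > 0, and for x ∈ ℝ^d, x ≠ 0, define g(x) = −a σ² r(‖x‖²)/‖x‖² · x, where r: ℝ₊ → ℝ₊ is differentiable, increasing, with 0 ≤ r ≤ 1, and 0 < a ≤ 2(d−2). Then for all x ≠ 0, ‖g(x)‖² + 2σ² ∑_{i=1}^d ∂_i g^i(x) = a σ⁴ [a r²(‖x‖²)/‖x‖² − 2(d−2) r(‖x‖²)/‖x‖² − 4 r'(‖x‖²)] ≤ 0. -/

import Mathlib

/-!
A radial field `φ(‖x‖²) x` on `ℝ^d` has divergence `d φ(‖x‖²) + 2 ‖x‖² φ'(‖x‖²)`, by the product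
rule applied coordinatewise. Taking `φ(t) = -aσ² r(t)/t` gives the identity. The bracket is
nonpositive because `r' ≥ 0` for monotone `r`, and `a r² ≤ a r ≤ 2(d-2) r` since `0 ≤ r ≤ 1`.
-/

open Finset

section Divergence

variable {ι : Type*} [Fintype ι] [DecidableEq ι]

noncomputable def divergence (F : EuclideanSpace ℝ ι → EuclideanSpace ℝ ι)
    (x : EuclideanSpace ℝ ι) : ℝ :=
  ∑ i, fderiv ℝ (fun y => F y i) x (EuclideanSpace.single i 1)

lemma divergence_smul_self_of_hasDerivAt {φ : ℝ → ℝ} {φ' : ℝ} (x : EuclideanSpace ℝ ι)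
    (hφ : HasDerivAt φ φ' (‖x‖ ^ 2)) :
    divergence (fun y => φ (‖y‖ ^ 2) • y) x
      = Fintype.card ι * φ (‖x‖ ^ 2) + 2 * ‖x‖ ^ 2 * φ' := by
  have hφN : HasFDerivAt (fun y : EuclideanSpace ℝ ι => φ (‖y‖ ^ 2))
      (φ' • (2 : ℕ) • innerSL ℝ x) x :=
    hφ.comp_hasFDerivAt x (hasStrictFDerivAt_norm_sq x).hasFDerivAt
  have hcoord (i : ι) : fderiv ℝ (fun y => (φ (‖y‖ ^ 2) • y) i) x (EuclideanSpace.single i 1)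
      = 2 * φ' * x i ^ 2 + φ (‖x‖ ^ 2) := by
    have hi : HasFDerivAt (fun y : EuclideanSpace ℝ ι => φ (‖y‖ ^ 2) * y i)
        (φ (‖x‖ ^ 2) • EuclideanSpace.proj i + x i • (φ' • (2 : ℕ) • innerSL ℝ x)) x :=
      hφN.mul (EuclideanSpace.proj (𝕜 := ℝ) i).hasFDerivAt
    simp only [PiLp.smul_apply, smul_eq_mul, hi.fderiv, add_apply,
      smul_apply, innerSL_apply_apply, EuclideanSpace.inner_single_right,
      PiLp.proj_apply, PiLp.single_eq_same, Real.ringHom_apply, nsmul_eq_mul]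
    ring
  simp only [divergence, hcoord, sum_add_distrib, ← mul_sum, ← EuclideanSpace.real_norm_sq_eq,
    sum_const, card_univ, nsmul_eq_mul]
  ring

end Divergence

theorem shrinkage_pointwise_bound_general (d : ℕ) (σ2 a : ℝ)
    (r : ℝ → ℝ) (hr_diff : Differentiable ℝ r) (hr_mono : Monotone r)
    (hr0 : ∀ s, 0 ≤ r s) (hr1 : ∀ s, r s ≤ 1)
    (ha0 : 0 < a) (ha : a ≤ 2 * (d - 2))
    (g : EuclideanSpace ℝ (Fin d) → EuclideanSpace ℝ (Fin d))
    (hg : g = fun x => (-(a * σ2) * r (‖x‖ ^ 2) / ‖x‖ ^ 2) • x)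
    (x : EuclideanSpace ℝ (Fin d)) (hx : x ≠ 0) :
    ‖g x‖ ^ 2 + 2 * σ2 * ∑ i : Fin d,
        fderiv ℝ (fun y => g y i) x (EuclideanSpace.single i 1)
      = a * σ2 ^ 2 * (a * r (‖x‖ ^ 2) ^ 2 / ‖x‖ ^ 2
          - 2 * (d - 2) * r (‖x‖ ^ 2) / ‖x‖ ^ 2 - 4 * deriv r (‖x‖ ^ 2)) ∧
    a * σ2 ^ 2 * (a * r (‖x‖ ^ 2) ^ 2 / ‖x‖ ^ 2
        - 2 * (d - 2) * r (‖x‖ ^ 2) / ‖x‖ ^ 2 - 4 * deriv r (‖x‖ ^ 2)) ≤ 0 := by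
  subst hg
  set s := ‖x‖ ^ 2
  have hs : 0 < s := by positivity
  have hφ : HasDerivAt (fun t => -(a * σ2) * r t / t)
      ((-(a * σ2) * deriv r s * s - -(a * σ2) * r s * 1) / s ^ 2) s :=
    (((hr_diff s).hasDerivAt).const_mul _).div (hasDerivAt_id s) hs.ne'
  have hdiv := divergence_smul_self_of_hasDerivAt x hφ
  rw [divergence, Fintype.card_fin] at hdiv
  have hr_sq : a * r s ^ 2 ≤ 2 * (d - 2) * r s := calc
    a * r s ^ 2 ≤ a * r s := by gcongr; exact pow_le_of_le_one (hr0 s) (hr1 s) two_ne_zero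
    _ ≤ 2 * (d - 2) * r s := by gcongr; exact hr0 s
  have hbracket : a * r s ^ 2 / s - 2 * (d - 2) * r s / s - 4 * deriv r s ≤ 0 := by
    have : a * r s ^ 2 / s ≤ 2 * (d - 2) * r s / s := by gcongr
    linarith [hr_mono.deriv_nonneg (x := s)]
  refine ⟨?_, mul_nonpos_of_nonneg_of_nonpos (by positivity) hbracket⟩
  rw [hdiv, norm_smul, mul_pow, Real.norm_eq_abs, sq_abs]
  field_simp
  ring

/-- For `d ≥ 3`, `σ² > 0`, `g(x) = -aσ² (r(‖x‖²)/‖x‖²) x` with `r : ℝ₊ → ℝ₊` differentiable,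
increasing, `0 ≤ r ≤ 1` and `0 < a ≤ 2(d-2)`, one has for every `x ≠ 0`:
`‖g(x)‖² + 2σ² ∑ᵢ ∂ᵢgⁱ(x)
  = aσ⁴ [a r(‖x‖²)²/‖x‖² - 2(d-2) r(‖x‖²)/‖x‖² - 4 r'(‖x‖²)] ≤ 0`. -/
theorem shrinkage_pointwise_bound (d : ℕ) (hd : 3 ≤ d) (σ2 a : ℝ) (hσ2 : 0 < σ2)
    (r : ℝ → ℝ) (hr_diff : Differentiable ℝ r) (hr_mono : Monotone r)
    (hr0 : ∀ s, 0 ≤ r s) (hr1 : ∀ s, r s ≤ 1)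
    (ha0 : 0 < a) (ha : a ≤ 2 * (d - 2))
    (g : EuclideanSpace ℝ (Fin d) → EuclideanSpace ℝ (Fin d))
    (hg : g = fun x => (-(a * σ2) * r (‖x‖ ^ 2) / ‖x‖ ^ 2) • x)
    (x : EuclideanSpace ℝ (Fin d)) (hx : x ≠ 0) :
    ‖g x‖ ^ 2 + 2 * σ2 * ∑ i : Fin d,
        fderiv ℝ (fun y => g y i) x (EuclideanSpace.single i 1)
      = a * σ2 ^ 2 * (a * r (‖x‖ ^ 2) ^ 2 / ‖x‖ ^ 2
          - 2 * (d - 2) * r (‖x‖ ^ 2) / ‖x‖ ^ 2 - 4 * deriv r (‖x‖ ^ 2)) ∧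
    a * σ2 ^ 2 * (a * r (‖x‖ ^ 2) ^ 2 / ‖x‖ ^ 2
        - 2 * (d - 2) * r (‖x‖ ^ 2) / ‖x‖ ^ 2 - 4 * deriv r (‖x‖ ^ 2)) ≤ 0 :=
  shrinkage_pointwise_bound_general d σ2 a r hr_diff hr_mono hr0 hr1 ha0 ha g hg x hx
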